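/- Let F = f^⊕ and G = g^⊕ be cyclically symmetric homogeneous polynomials of degrees r' and r'' respectively. Suppose the seed f is of class D(C_f, σ') and the seed g is of class D(C_g, σ''), and let 0 < σ < min(σ', σ''). Then the Poisson bracket {F,G} admits a seed h of class D(C_h, σ) with C_h = r' r'' C_f C_g / ((1 − e^{−max(σ',σ'')})(1 − e^{−max(σ',σ'')+σ})). -/

import Mathlib

open MvPolynomial

/-- Polynomials in the `2N` phase-space variables `x_0,…,x_{N−1},y_0,…,y_{N−1}`:
`Sum.inl l` is the variable `x_l` and `Sum.inr l` is `y_l`. -/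
abbrev Pol (N : ℕ) := MvPolynomial (Fin N ⊕ Fin N) ℝ

/-- Poisson bracket `{f,g} = Σ_l (∂f/∂x_l ∂g/∂y_l − ∂f/∂y_l ∂g/∂x_l)`. -/
noncomputable def pbracket {N : ℕ} (f g : Pol N) : Pol N :=
  ∑ l : Fin N,
    (pderiv (Sum.inl l) f * pderiv (Sum.inr l) g -
      pderiv (Sum.inr l) f * pderiv (Sum.inl l) g)

/-- Polynomial norm: the sum of the absolute values of the coefficients. -/
noncomputable def pnorm {N : ℕ} (f : Pol N) : ℝ :=
  ∑ d ∈ f.support, |coeff d f|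

/-- Action of the cyclic permutation `τ` on polynomials: `(τ f)(x,y) = f(τx, τy)`,
where `(τ x)_j = x_{j+1 mod N}`. -/
noncomputable def cshiftP {N : ℕ} (f : Pol N) : Pol N :=
  rename (Sum.map (finRotate N : Fin N → Fin N) (finRotate N : Fin N → Fin N)) f

/-- The extensive function generated by a seed: `f^⊕ = Σ_{l=1}^N τ^l f`. -/
noncomputable def oplus {N : ℕ} (f : Pol N) : Pol N :=
  ∑ l ∈ Finset.Icc 1 N, cshiftP^[l] f

/-- Set of sites appearing (in `x` or `y`) with nonzero exponent in a monomial. -/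
def siteSupport {N : ℕ} (d : (Fin N ⊕ Fin N) →₀ ℕ) : Finset (Fin N) :=
  Finset.univ.filter fun l => d (Sum.inl l) ≠ 0 ∨ d (Sum.inr l) ≠ 0

/-- `f` is left aligned with interaction range at most `m`: every monomial of `f`
involves only the sites `0,…,m`. -/
def RangeLE {N : ℕ} (m : ℕ) (f : Pol N) : Prop :=
  ∀ d ∈ f.support, ∀ l ∈ siteSupport d, (l : ℕ) ≤ m

/-- `F` is a decomposition `f = Σ_{m≥0} f^{(m)}` of the seed `f` into left-aligned
components of increasing interaction range (truncated at `m = N` on the periodic chain). -/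
def IsDecomp {N : ℕ} (f : Pol N) (F : ℕ → Pol N) : Prop :=
  f = ∑ m ∈ Finset.range (N + 1), F m ∧ ∀ m, RangeLE m (F m)

/-- Exponential decay `‖f^{(m)}‖ ≤ C e^{−σm}` of the components of a decomposition. -/
def Decay {N : ℕ} (C σ : ℝ) (F : ℕ → Pol N) : Prop :=
  ∀ m : ℕ, pnorm (F m) ≤ C * Real.exp (-σ * m)

/-- A seed `f` is of class `D(C,σ)` if it admits a decomposition `f = Σ_m f^{(m)}`
into left-aligned components of interaction range at most `m` with `‖f^{(m)}‖ ≤ C e^{−σm}`. -/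
def SeedClassD {N : ℕ} (C σ : ℝ) (f : Pol N) : Prop :=
  ∃ F : ℕ → Pol N, IsDecomp f F ∧ Decay C σ F


/-!
Decompose `f = Σ f^{(m₁)}` and `g = Σ g^{(m₂)}` into homogeneous left-aligned pieces. Since `τ`
preserves the bracket and `(τ^k h)^⊕ = h^⊕`, we get
`{F, G} = (Σ_{m₁,m₂} Σ_{l=1}^N {f^{(m₁)}, τ^l g^{(m₂)}})^⊕`, where each term may be shifted at will.
A term vanishes unless the supports of its two factors meet, and shifting it back by `N - l` when
`τ^l g^{(m₂)}` wraps around the chain makes it left aligned of range `m₁ + m₂` (capped at `N`).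
By Euler's identity the terms for fixed `(m₁, m₂)` have total norm at most
`r' r'' ‖f^{(m₁)}‖ ‖g^{(m₂)}‖`. Finally, for `σ' ≤ σ''` and `m₁ ≤ m ≤ m₁ + m₂`,
`e^{-σ' m₁ - σ'' m₂} ≤ e^{-σ m} a^{m₁ + m₂ - m} b^{m - m₁}` with `a = e^{-σ''}`, `b = e^{-σ'' + σ}`,
so the sum over `min (m₁ + m₂) N = m` is bounded by `e^{-σ m}` times two geometric series.
-/

open MvPolynomial Finset

namespace CyclicSeed

variable {N : ℕ}

section Norm

lemma pnorm_nonneg (p : Pol N) : 0 ≤ pnorm p :=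
  sum_nonneg fun _ _ => abs_nonneg _

lemma pnorm_eq_sum_of_support_subset {p : Pol N} {s : Finset ((Fin N ⊕ Fin N) →₀ ℕ)}
    (h : p.support ⊆ s) : pnorm p = ∑ d ∈ s, |coeff d p| :=
  sum_subset h fun d _ hd => by rw [notMem_support_iff.mp hd, abs_zero]

lemma pnorm_zero : pnorm (0 : Pol N) = 0 := by simp [pnorm]

lemma pnorm_add_le (p q : Pol N) : pnorm (p + q) ≤ pnorm p + pnorm q := by
  classical
  rw [pnorm_eq_sum_of_support_subset support_add,
    pnorm_eq_sum_of_support_subset (subset_union_left (s₂ := q.support)),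
    pnorm_eq_sum_of_support_subset (subset_union_right (s₁ := p.support)), ← sum_add_distrib]
  exact sum_le_sum fun d _ => by rw [coeff_add]; exact abs_add_le _ _

lemma pnorm_sub_le (p q : Pol N) : pnorm (p - q) ≤ pnorm p + pnorm q := by
  simpa [sub_eq_add_neg, pnorm, support_neg] using pnorm_add_le p (-q)

lemma pnorm_sum_le {α : Type*} (s : Finset α) (f : α → Pol N) :
    pnorm (∑ i ∈ s, f i) ≤ ∑ i ∈ s, pnorm (f i) :=
  le_sum_of_subadditive pnorm pnorm_zero.le pnorm_add_le s f

lemma pnorm_monomial_le (d : (Fin N ⊕ Fin N) →₀ ℕ) (c : ℝ) : pnorm (monomial d c) ≤ |c| := by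
  classical
  rcases eq_or_ne c 0 with rfl | hc
  · simp [pnorm_zero]
  · simp [pnorm, support_monomial, hc]

lemma pnorm_mul_le (p q : Pol N) : pnorm (p * q) ≤ pnorm p * pnorm q := by
  conv_lhs => rw [p.as_sum, q.as_sum, sum_mul_sum]
  refine (pnorm_sum_le _ _).trans ?_
  rw [pnorm, pnorm, sum_mul_sum]
  refine sum_le_sum fun d _ => (pnorm_sum_le _ _).trans (sum_le_sum fun e _ => ?_)
  rw [monomial_mul, ← abs_mul]
  exact pnorm_monomial_le _ _

lemma pnorm_pderiv_le (v : Fin N ⊕ Fin N) (p : Pol N) :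
    pnorm (pderiv v p) ≤ ∑ d ∈ p.support, (d v : ℝ) * |coeff d p| := by
  conv_lhs => rw [p.as_sum, map_sum]
  refine (pnorm_sum_le _ _).trans (sum_le_sum fun d _ => ?_)
  rw [pderiv_monomial]
  refine (pnorm_monomial_le _ _).trans_eq ?_
  rw [abs_mul, Nat.abs_cast, mul_comm]

/-- Euler's identity `Σ_v x_v ∂_v p = r p`, in norm. -/
lemma sum_pnorm_pderiv_le {r : ℕ} {p : Pol N} (hp : p.IsHomogeneous r) :
    ∑ v, pnorm (pderiv v p) ≤ r * pnorm p := by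
  refine (sum_le_sum fun v _ => pnorm_pderiv_le v p).trans_eq ?_
  rw [sum_comm, pnorm, mul_sum]
  refine sum_congr rfl fun d hd => ?_
  rw [← sum_mul, ← hp (mem_support_iff.mp hd), ← Nat.cast_sum, Finsupp.weight_apply,
    Finsupp.sum_fintype _ _ fun _ => by simp]
  simp

lemma pnorm_rename_equiv (e : (Fin N ⊕ Fin N) ≃ (Fin N ⊕ Fin N)) (p : Pol N) :
    pnorm (rename e p) = pnorm p := by
  classical
  rw [pnorm, support_rename_of_injective e.injective,
    sum_image fun _ _ _ _ h => Finsupp.mapDomain_injective e.injective h]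
  exact sum_congr rfl fun d _ => by rw [coeff_rename_mapDomain _ e.injective]

lemma pnorm_homogeneousComponent_le (r : ℕ) (p : Pol N) :
    pnorm (homogeneousComponent r p) ≤ pnorm p := by
  rw [pnorm_eq_sum_of_support_subset ((support_homogeneousComponent r p).trans_subset
    (filter_subset _ _)), pnorm]
  refine sum_le_sum fun d _ => ?_
  rw [coeff_homogeneousComponent]
  split_ifs <;> simp

end Norm

section Shift

lemma sum_Icc_one_eq_sum_range_succ {M : Type*} [AddCommMonoid M] (φ : ℕ → M) (n : ℕ) :
    ∑ l ∈ Icc 1 n, φ l = ∑ l ∈ range n, φ (l + 1) := by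
  rw [range_eq_Ico, sum_Ico_add' φ 0 n 1]
  rfl

lemma sum_Icc_one_eq_sum_range_of_eq {M : Type*} [AddCommMonoid M] {φ : ℕ → M} {n : ℕ}
    (h : φ n = φ 0) : ∑ l ∈ Icc 1 n, φ l = ∑ l ∈ range n, φ l := by
  rw [sum_Icc_one_eq_sum_range_succ]
  rcases n with _ | n
  · rfl
  · rw [sum_range_succ, sum_range_succ' φ, h]

def rotVars (N k : ℕ) : Equiv.Perm (Fin N ⊕ Fin N) :=
  Equiv.sumCongr (finRotate N ^ k) (finRotate N ^ k)

lemma cshiftP_iterate_eq_rename (k : ℕ) (p : Pol N) :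
    cshiftP^[k] p = rename (rotVars N k) p := by
  induction k with
  | zero => simp [rotVars]
  | succ k ih =>
    rw [Function.iterate_succ_apply', ih, cshiftP, rename_rename]
    congr 2
    funext x
    cases x <;> simp [rotVars, pow_succ']

open Fin.NatCast in
lemma finRotate_pow_apply {n : ℕ} (k : ℕ) (i : Fin (n + 1)) :
    (finRotate (n + 1) ^ k) i = i + k := by
  induction k with
  | zero => simp
  | succ k ih => rw [pow_succ', Equiv.Perm.mul_apply, ih, finRotate_apply, Nat.cast_succ, add_assoc]

lemma finRotate_pow_self : finRotate N ^ N = 1 := by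
  rcases N with _ | n
  · exact Subsingleton.elim _ _
  · ext i
    simp [finRotate_pow_apply]

lemma val_finRotate_pow_apply {k : ℕ} {t : Fin N} (h : (t : ℕ) + k < N) :
    ((finRotate N ^ k) t : ℕ) = t + k := by
  rcases N with _ | n
  · exact t.elim0
  · rw [finRotate_pow_apply, Fin.val_add, Fin.val_natCast, Nat.mod_eq_of_lt (by omega : k < n + 1),
      Nat.mod_eq_of_lt h]

lemma cshiftP_iterate_self (p : Pol N) : cshiftP^[N] p = p := by
  simp [cshiftP_iterate_eq_rename, rotVars, finRotate_pow_self]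

lemma pnorm_cshiftP_iterate (k : ℕ) (p : Pol N) : pnorm (cshiftP^[k] p) = pnorm p := by
  rw [cshiftP_iterate_eq_rename, pnorm_rename_equiv]

lemma cshiftP_iterate_sum {α : Type*} (k : ℕ) (s : Finset α) (f : α → Pol N) :
    cshiftP^[k] (∑ i ∈ s, f i) = ∑ i ∈ s, cshiftP^[k] (f i) := by
  simp only [cshiftP_iterate_eq_rename, map_sum]

lemma pderiv_cshiftP_iterate (k : ℕ) (v : Fin N ⊕ Fin N) (p : Pol N) :
    pderiv (rotVars N k v) (cshiftP^[k] p) = cshiftP^[k] (pderiv v p) := by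
  simp only [cshiftP_iterate_eq_rename]
  exact pderiv_rename (rotVars N k).injective v p

lemma cshiftP_iterate_pbracket (k : ℕ) (a b : Pol N) :
    cshiftP^[k] (pbracket a b) = pbracket (cshiftP^[k] a) (cshiftP^[k] b) := by
  conv_rhs => rw [pbracket, ← Equiv.sum_comp (finRotate N ^ k)]
  simp only [pbracket, cshiftP_iterate_sum]
  refine sum_congr rfl fun l _ => ?_
  rw [show Sum.inl ((finRotate N ^ k) l) = rotVars N k (Sum.inl l) from rfl,
    show Sum.inr ((finRotate N ^ k) l) = rotVars N k (Sum.inr l) from rfl,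
    pderiv_cshiftP_iterate, pderiv_cshiftP_iterate, pderiv_cshiftP_iterate,
    pderiv_cshiftP_iterate]
  simp only [cshiftP_iterate_eq_rename, map_sub, map_mul]

lemma pbracket_sum_left {α : Type*} (s : Finset α) (f : α → Pol N) (b : Pol N) :
    pbracket (∑ i ∈ s, f i) b = ∑ i ∈ s, pbracket (f i) b := by
  simp only [pbracket, map_sum, sum_mul, ← sum_sub_distrib]
  exact sum_comm

lemma pbracket_sum_right {α : Type*} (a : Pol N) (s : Finset α) (f : α → Pol N) :
    pbracket a (∑ i ∈ s, f i) = ∑ i ∈ s, pbracket a (f i) := by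
  simp only [pbracket, map_sum, mul_sum, ← sum_sub_distrib]
  exact sum_comm

lemma oplus_sum {α : Type*} (s : Finset α) (f : α → Pol N) :
    oplus (∑ i ∈ s, f i) = ∑ i ∈ s, oplus (f i) := by
  simp only [oplus, cshiftP_iterate_sum]
  exact sum_comm

lemma oplus_cshiftP (q : Pol N) : oplus (cshiftP q) = oplus q := by
  simp only [oplus, ← Function.iterate_succ_apply]
  rw [sum_Icc_one_eq_sum_range_succ (fun l => cshiftP^[l] q)]
  refine sum_Icc_one_eq_sum_range_of_eq ?_
  simp only [Function.iterate_succ_apply, cshiftP_iterate_self]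
  rfl

lemma oplus_cshiftP_iterate (k : ℕ) (q : Pol N) : oplus (cshiftP^[k] q) = oplus q := by
  induction k generalizing q with
  | zero => rfl
  | succ k ih => rw [Function.iterate_succ_apply, ih, oplus_cshiftP]

lemma cshiftP_iterate_oplus (k : ℕ) (q : Pol N) : cshiftP^[k] (oplus q) = oplus q := by
  refine Function.iterate_fixed ?_ k
  conv_rhs => rw [← oplus_cshiftP]
  simpa only [oplus, Function.iterate_one, ← Function.iterate_succ_apply,
    ← Function.iterate_succ_apply'] using cshiftP_iterate_sum 1 (Icc 1 N) (cshiftP^[·] q)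

lemma oplus_pbracket_oplus (f g : Pol N) :
    oplus (pbracket f (oplus g)) = pbracket (oplus f) (oplus g) := by
  rw [oplus]
  simp only [cshiftP_iterate_pbracket, cshiftP_iterate_oplus]
  rw [← pbracket_sum_left]
  rfl

end Shift

section Sites

lemma pderiv_mem_supported {σ R : Type*} [CommSemiring R] {s : Set σ} {p : MvPolynomial σ R}
    (hp : p ∈ supported R s) (i : σ) : pderiv i p ∈ supported R s := by
  induction hp using Algebra.adjoin_induction with
  | mem x hx =>
    obtain ⟨j, -, rfl⟩ := hx
    rcases eq_or_ne j i with rfl | h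
    · rw [pderiv_X_self]; exact one_mem _
    · rw [pderiv_X_of_ne h]; exact zero_mem _
  | algebraMap r => rw [algebraMap_eq, pderiv_C]; exact zero_mem _
  | add x y _ _ hx hy => rw [map_add]; exact add_mem hx hy
  | mul x y hx' hy' hx hy =>
    rw [Derivation.leibniz, smul_eq_mul, smul_eq_mul]
    exact add_mem (mul_mem hx' hy) (mul_mem hy' hx)

lemma pderiv_eq_zero_of_mem_supported {σ R : Type*} [CommSemiring R] {s : Set σ}
    {p : MvPolynomial σ R} (hp : p ∈ supported R s) {i : σ} (hi : i ∉ s) : pderiv i p = 0 :=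
  pderiv_eq_zero_of_notMem_vars fun h => hi (mem_supported.1 hp h)

lemma pbracket_mem_supported {s : Set (Fin N ⊕ Fin N)} {a b : Pol N} (ha : a ∈ supported ℝ s)
    (hb : b ∈ supported ℝ s) : pbracket a b ∈ supported ℝ s :=
  sum_mem fun _ _ => sub_mem (mul_mem (pderiv_mem_supported ha _) (pderiv_mem_supported hb _))
    (mul_mem (pderiv_mem_supported ha _) (pderiv_mem_supported hb _))

def siteVars (S : Set (Fin N)) : Set (Fin N ⊕ Fin N) :=
  Sum.elim id id ⁻¹' S

lemma pbracket_eq_zero_of_disjoint {S T : Set (Fin N)} (hST : Disjoint S T) {a b : Pol N}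
    (ha : a ∈ supported ℝ (siteVars S)) (hb : b ∈ supported ℝ (siteVars T)) :
    pbracket a b = 0 := by
  refine sum_eq_zero fun l _ => ?_
  by_cases hl : l ∈ S
  · have hl' : l ∉ T := Set.disjoint_left.1 hST hl
    rw [pderiv_eq_zero_of_mem_supported hb (i := Sum.inl l) hl',
      pderiv_eq_zero_of_mem_supported hb (i := Sum.inr l) hl', mul_zero, mul_zero, sub_zero]
  · rw [pderiv_eq_zero_of_mem_supported ha (i := Sum.inl l) hl,
      pderiv_eq_zero_of_mem_supported ha (i := Sum.inr l) hl, zero_mul, zero_mul, sub_zero]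

lemma cshiftP_iterate_mem_supported {S T : Set (Fin N)} {k : ℕ}
    (hST : ∀ t ∈ S, (finRotate N ^ k) t ∈ T) {p : Pol N} (hp : p ∈ supported ℝ (siteVars S)) :
    cshiftP^[k] p ∈ supported ℝ (siteVars T) := by
  classical
  rw [cshiftP_iterate_eq_rename, mem_supported]
  intro v hv
  obtain ⟨w, hw, rfl⟩ := mem_image.1 (vars_rename _ p hv)
  cases w with
  | inl t => exact hST t (mem_supported.1 hp hw)
  | inr t => exact hST t (mem_supported.1 hp hw)

lemma cshiftP_iterate_mem_supported_Icc {m k : ℕ} {p : Pol N}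
    (hp : p ∈ supported ℝ (siteVars {t | (t : ℕ) ≤ m})) (h : k + m < N) :
    cshiftP^[k] p ∈ supported ℝ (siteVars {t | k ≤ (t : ℕ) ∧ (t : ℕ) ≤ k + m}) :=
  cshiftP_iterate_mem_supported (fun t (ht : (t : ℕ) ≤ m) => by
    change k ≤ _ ∧ _ ≤ _
    rw [val_finRotate_pow_apply (by omega)]
    omega) hp

lemma rangeLE_iff_mem_supported {m : ℕ} {p : Pol N} :
    RangeLE m p ↔ p ∈ supported ℝ (siteVars {t | (t : ℕ) ≤ m}) := by
  classical
  rw [mem_supported]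
  constructor
  · intro h v hv
    obtain ⟨d, hd, hvd⟩ := (mem_vars_iff_mem_support v).1 hv
    cases v with
    | inl l => exact h d hd l (by simpa [siteSupport] using Or.inl (Finsupp.mem_support_iff.1 hvd))
    | inr l => exact h d hd l (by simpa [siteSupport] using Or.inr (Finsupp.mem_support_iff.1 hvd))
  · intro h d hd l hl
    simp only [siteSupport, mem_filter, mem_univ, true_and] at hl
    rcases hl with hl | hl
    · exact h ((mem_vars_iff_mem_support (Sum.inl l)).2 ⟨d, hd, Finsupp.mem_support_iff.2 hl⟩)
    · exact h ((mem_vars_iff_mem_support (Sum.inr l)).2 ⟨d, hd, Finsupp.mem_support_iff.2 hl⟩)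

end Sites

section BracketNorm

lemma pnorm_pbracket_le (a c : Pol N) :
    pnorm (pbracket a c) ≤ ∑ s, (pnorm (pderiv (Sum.inl s) a) * pnorm (pderiv (Sum.inr s) c)
        + pnorm (pderiv (Sum.inr s) a) * pnorm (pderiv (Sum.inl s) c)) :=
  (pnorm_sum_le _ _).trans (sum_le_sum fun _ _ =>
    (pnorm_sub_le _ _).trans (add_le_add (pnorm_mul_le _ _) (pnorm_mul_le _ _)))

open Fin.NatCast in
lemma sum_Icc_finRotate_pow_apply {M : Type*} [AddCommMonoid M] (G : Fin N → M) (u : Fin N) :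
    ∑ l ∈ Icc 1 N, G ((finRotate N ^ l) u) = ∑ t, G t := by
  rw [sum_Icc_one_eq_sum_range_of_eq (by rw [finRotate_pow_self, pow_zero])]
  rcases N with _ | n
  · exact u.elim0
  · simp only [finRotate_pow_apply]
    rw [← Fin.sum_univ_eq_sum_range (fun l => G (u + (l : Fin (n + 1))))]
    simp only [Fin.cast_val_eq_self]
    exact Equiv.sum_comp (Equiv.addLeft u) G

lemma sum_pnorm_pbracket_cshiftP_iterate_le {r' r'' : ℕ} {a b : Pol N}
    (ha : a.IsHomogeneous r') (hb : b.IsHomogeneous r'') :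
    ∑ l ∈ Icc 1 N, pnorm (pbracket a (cshiftP^[l] b)) ≤ r' * r'' * (pnorm a * pnorm b) := by
  set X : Pol N → Fin N → ℝ := fun p s => pnorm (pderiv (Sum.inl s) p)
  set Y : Pol N → Fin N → ℝ := fun p s => pnorm (pderiv (Sum.inr s) p)
  have hX (p : Pol N) : 0 ≤ ∑ s, X p s := sum_nonneg fun _ _ => pnorm_nonneg _
  have hY (p : Pol N) : 0 ≤ ∑ s, Y p s := sum_nonneg fun _ _ => pnorm_nonneg _
  have heuler {r : ℕ} {p : Pol N} (hp : p.IsHomogeneous r) :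
      ∑ s, X p s + ∑ s, Y p s ≤ r * pnorm p := by
    simpa [Fintype.sum_sum_type] using sum_pnorm_pderiv_le hp
  have hshift (l : ℕ) : pnorm (pbracket a (cshiftP^[l] b)) ≤
      ∑ u, (X a ((finRotate N ^ l) u) * Y b u + Y a ((finRotate N ^ l) u) * X b u) := by
    refine (pnorm_pbracket_le _ _).trans_eq ?_
    rw [← Equiv.sum_comp (finRotate N ^ l)]
    refine sum_congr rfl fun u _ => ?_
    rw [show Sum.inl ((finRotate N ^ l) u) = rotVars N l (Sum.inl u) from rfl,
      show Sum.inr ((finRotate N ^ l) u) = rotVars N l (Sum.inr u) from rfl,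
      pderiv_cshiftP_iterate, pderiv_cshiftP_iterate, pnorm_cshiftP_iterate,
      pnorm_cshiftP_iterate]
    rfl
  calc ∑ l ∈ Icc 1 N, pnorm (pbracket a (cshiftP^[l] b))
      ≤ ∑ l ∈ Icc 1 N, ∑ u,
          (X a ((finRotate N ^ l) u) * Y b u + Y a ((finRotate N ^ l) u) * X b u) :=
        sum_le_sum fun l _ => hshift l
    _ = (∑ s, X a s) * ∑ u, Y b u + (∑ s, Y a s) * ∑ u, X b u := by
        rw [sum_comm]
        simp only [sum_add_distrib, ← sum_mul, sum_Icc_finRotate_pow_apply, ← mul_sum]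
    _ ≤ (∑ s, X a s + ∑ s, Y a s) * (∑ s, X b s + ∑ s, Y b s) := by
        nlinarith [mul_nonneg (hX a) (hX b), mul_nonneg (hY a) (hY b)]
    _ ≤ (r' * pnorm a) * (r'' * pnorm b) :=
        mul_le_mul (heuler ha) (heuler hb) (add_nonneg (hX b) (hY b))
          (by have := pnorm_nonneg a; positivity)
    _ = r' * r'' * (pnorm a * pnorm b) := by ring

end BracketNorm

section Geometric

lemma sum_pow_le_inv_one_sub {x : ℝ} (h0 : 0 ≤ x) (h1 : x < 1) (s : Finset ℕ) :
    ∑ i ∈ s, x ^ i ≤ (1 - x)⁻¹ :=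
  tsum_geometric_of_lt_one h0 h1 ▸
    (summable_geometric_of_lt_one h0 h1).sum_le_tsum s fun i _ => pow_nonneg h0 i

lemma sum_pow_mul_pow_le {a b : ℝ} (ha0 : 0 ≤ a) (ha1 : a < 1) (hb0 : 0 ≤ b) (hb1 : b < 1)
    (s : Finset (ℕ × ℕ)) : ∑ q ∈ s, a ^ q.1 * b ^ q.2 ≤ (1 - a)⁻¹ * (1 - b)⁻¹ := by
  classical
  calc ∑ q ∈ s, a ^ q.1 * b ^ q.2
      ≤ ∑ q ∈ s.image Prod.fst ×ˢ s.image Prod.snd, a ^ q.1 * b ^ q.2 :=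
        sum_le_sum_of_subset_of_nonneg subset_product fun q _ _ => by positivity
    _ = (∑ i ∈ s.image Prod.fst, a ^ i) * ∑ j ∈ s.image Prod.snd, b ^ j := by
        rw [sum_product, sum_mul_sum]
    _ ≤ (1 - a)⁻¹ * (1 - b)⁻¹ :=
        mul_le_mul (sum_pow_le_inv_one_sub ha0 ha1 _) (sum_pow_le_inv_one_sub hb0 hb1 _)
          (sum_nonneg fun _ _ => by positivity) (inv_nonneg.2 (by linarith))

/-- The pairs of ranges `(m₁, m₂)` whose brackets contribute to the component of range `m`. -/
def cappedDiag (N m : ℕ) : Finset (ℕ × ℕ) :=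
  (range (N + 1) ×ˢ range (N + 1)).filter fun q => min (q.1 + q.2) N = m

lemma sum_cappedDiag_exp_le {σ σ₁ σ₂ : ℝ} (h₁ : σ ≤ σ₁) (h₂ : σ < σ₂) (h₀ : 0 < σ₂) (m : ℕ) :
    ∑ q ∈ cappedDiag N m, Real.exp (-σ₁ * q.1) * Real.exp (-σ₂ * q.2)
      ≤ ((1 - Real.exp (-σ₂)) * (1 - Real.exp (-σ₂ + σ)))⁻¹ * Real.exp (-σ * m) := by
  have hmem : ∀ q ∈ cappedDiag N m, q.1 ≤ m ∧ m ≤ q.1 + q.2 := by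
    intro q hq
    simp only [cappedDiag, mem_filter, mem_product, mem_range] at hq
    omega
  have hpt : ∀ q ∈ cappedDiag N m, Real.exp (-σ₁ * q.1) * Real.exp (-σ₂ * q.2) ≤
      Real.exp (-σ * m) *
        (Real.exp (-σ₂) ^ (q.1 + q.2 - m) * Real.exp (-σ₂ + σ) ^ (m - q.1)) := by
    intro q hq
    obtain ⟨h1, h2⟩ := hmem q hq
    rw [← Real.exp_add, ← Real.exp_nat_mul, ← Real.exp_nat_mul, ← Real.exp_add, ← Real.exp_add,
      Real.exp_le_exp, Nat.cast_sub h1, Nat.cast_sub h2, Nat.cast_add]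
    nlinarith [mul_le_mul_of_nonneg_right h₁ (Nat.cast_nonneg q.1 : (0 : ℝ) ≤ q.1)]
  have hinj : Set.InjOn (fun q : ℕ × ℕ => (q.1 + q.2 - m, m - q.1)) (cappedDiag N m) := by
    intro q hq q' hq' h
    have := hmem q hq
    have := hmem q' hq'
    simp only [Prod.mk.injEq] at h
    ext <;> omega
  calc _ ≤ ∑ q ∈ cappedDiag N m, Real.exp (-σ * m) *
          (Real.exp (-σ₂) ^ (q.1 + q.2 - m) * Real.exp (-σ₂ + σ) ^ (m - q.1)) :=
        sum_le_sum hpt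
    _ = Real.exp (-σ * m) * ∑ p ∈ (cappedDiag N m).image (fun q => (q.1 + q.2 - m, m - q.1)),
          Real.exp (-σ₂) ^ p.1 * Real.exp (-σ₂ + σ) ^ p.2 := by
        rw [sum_image hinj, mul_sum]
    _ ≤ Real.exp (-σ * m) * ((1 - Real.exp (-σ₂))⁻¹ * (1 - Real.exp (-σ₂ + σ))⁻¹) := by
        gcongr
        exact sum_pow_mul_pow_le (Real.exp_pos _).le (Real.exp_lt_one_iff.2 (by linarith))
          (Real.exp_pos _).le (Real.exp_lt_one_iff.2 (by linarith)) _
    _ = _ := by rw [mul_inv]; ring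

lemma sum_cappedDiag_exp_le_max {σ σ₁ σ₂ : ℝ} (h₀ : 0 < σ) (h : σ < min σ₁ σ₂) (m : ℕ) :
    ∑ q ∈ cappedDiag N m, Real.exp (-σ₁ * q.1) * Real.exp (-σ₂ * q.2)
      ≤ ((1 - Real.exp (-max σ₁ σ₂)) * (1 - Real.exp (-max σ₁ σ₂ + σ)))⁻¹ *
          Real.exp (-σ * m) := by
  rw [lt_min_iff] at h
  rcases le_total σ₁ σ₂ with h₁₂ | h₂₁
  · rw [max_eq_right h₁₂]
    exact sum_cappedDiag_exp_le h.1.le h.2 (by linarith) m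
  · rw [max_eq_left h₂₁]
    refine le_of_eq_of_le ?_ (sum_cappedDiag_exp_le (N := N) h.2.le h.1 (by linarith) m)
    have hswap : ∀ q ∈ cappedDiag N m, q.swap ∈ cappedDiag N m := by
      intro q hq
      simp only [cappedDiag, mem_filter, mem_product, mem_range, Prod.fst_swap,
        Prod.snd_swap] at hq ⊢
      omega
    exact sum_nbij' Prod.swap Prod.swap hswap hswap (fun _ _ => rfl) (fun _ _ => rfl)
      fun _ _ => mul_comm _ _

end Geometric

section BracketSeed

/-- The shift that brings `{a, τ^l b}` back to left-aligned position: by `N - l` when the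
support of `τ^l b` wraps around the chain, not at all otherwise. -/
def alignShift (N m₁ l : ℕ) : ℕ :=
  if l ≤ m₁ ∨ l = N then 0 else N - l

lemma cshiftP_alignShift_pbracket_mem_supported {m₁ m₂ l : ℕ} {a b : Pol N}
    (ha : a ∈ supported ℝ (siteVars {t | (t : ℕ) ≤ m₁}))
    (hb : b ∈ supported ℝ (siteVars {t | (t : ℕ) ≤ m₂})) (hl : l ≤ N) (h : m₁ + m₂ < N) :
    cshiftP^[alignShift N m₁ l] (pbracket a (cshiftP^[l] b)) ∈
      supported ℝ (siteVars {t | (t : ℕ) ≤ m₁ + m₂}) := by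
  have hmono {S : Set (Fin N)} (hS : ∀ t ∈ S, (t : ℕ) ≤ m₁ + m₂) :
      supported ℝ (siteVars S) ≤ supported ℝ (siteVars {t | (t : ℕ) ≤ m₁ + m₂}) :=
    supported_mono (Set.preimage_mono hS)
  have haL := hmono (fun t (ht : (t : ℕ) ≤ m₁) => by omega) ha
  have hbL := hmono (fun t (ht : (t : ℕ) ≤ m₂) => by omega) hb
  unfold alignShift
  split_ifs with hc
  · rw [Function.iterate_zero_apply]
    refine pbracket_mem_supported haL ?_
    rcases hc with hc | rfl
    · exact hmono (fun t ht => by have := ht.2; omega)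
        (cshiftP_iterate_mem_supported_Icc hb (by omega))
    · rwa [cshiftP_iterate_self]
  · simp only [not_or, not_le] at hc
    by_cases hw : l + m₂ < N
    · have hdisj : Disjoint {t : Fin N | (t : ℕ) ≤ m₁} {t | l ≤ (t : ℕ) ∧ (t : ℕ) ≤ l + m₂} :=
        Set.disjoint_left.2 fun t (h₁ : (t : ℕ) ≤ m₁) h₂ => by have := h₂.1; omega
      rw [pbracket_eq_zero_of_disjoint hdisj ha (cshiftP_iterate_mem_supported_Icc hb hw)]
      simp [cshiftP_iterate_eq_rename]
    · rw [cshiftP_iterate_pbracket, ← Function.iterate_add_apply, Nat.sub_add_cancel hl,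
        cshiftP_iterate_self]
      exact pbracket_mem_supported (hmono (fun t ht => by have := ht.2; omega)
        (cshiftP_iterate_mem_supported_Icc ha (by omega))) hbL

noncomputable def bracketSeed (m₁ : ℕ) (a b : Pol N) : Pol N :=
  ∑ l ∈ Icc 1 N, cshiftP^[alignShift N m₁ l] (pbracket a (cshiftP^[l] b))

lemma oplus_bracketSeed (m₁ : ℕ) (a b : Pol N) :
    oplus (bracketSeed m₁ a b) = oplus (pbracket a (oplus b)) := by
  rw [bracketSeed, oplus_sum]
  simp only [oplus_cshiftP_iterate]
  rw [← oplus_sum, ← pbracket_sum_right]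
  rfl

lemma pnorm_bracketSeed_le {r' r'' : ℕ} {a b : Pol N} (ha : a.IsHomogeneous r')
    (hb : b.IsHomogeneous r'') (m₁ : ℕ) :
    pnorm (bracketSeed m₁ a b) ≤ r' * r'' * (pnorm a * pnorm b) := by
  refine (pnorm_sum_le _ _).trans ?_
  simp only [pnorm_cshiftP_iterate]
  exact sum_pnorm_pbracket_cshiftP_iterate_le ha hb

lemma bracketSeed_mem_supported {m₁ m₂ : ℕ} {a b : Pol N}
    (ha : a ∈ supported ℝ (siteVars {t | (t : ℕ) ≤ m₁}))
    (hb : b ∈ supported ℝ (siteVars {t | (t : ℕ) ≤ m₂})) (h : m₁ + m₂ < N) :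
    bracketSeed m₁ a b ∈ supported ℝ (siteVars {t | (t : ℕ) ≤ m₁ + m₂}) :=
  sum_mem fun _ hl => cshiftP_alignShift_pbracket_mem_supported ha hb (mem_Icc.1 hl).2 h

noncomputable def bracketDecomp (F G : ℕ → Pol N) (m : ℕ) : Pol N :=
  ∑ q ∈ cappedDiag N m, bracketSeed q.1 (F q.1) (G q.2)

lemma oplus_sum_bracketDecomp {f g : Pol N} {F G : ℕ → Pol N}
    (hF : f = ∑ m ∈ range (N + 1), F m) (hG : g = ∑ m ∈ range (N + 1), G m) :
    oplus (∑ m ∈ range (N + 1), bracketDecomp F G m) = pbracket (oplus f) (oplus g) := by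
  have hfib : ∑ m ∈ range (N + 1), bracketDecomp F G m =
      ∑ q ∈ range (N + 1) ×ˢ range (N + 1), bracketSeed q.1 (F q.1) (G q.2) :=
  by
    rw [← sum_fiberwise_of_maps_to (g := fun q : ℕ × ℕ => min (q.1 + q.2) N)
      (t := range (N + 1)) fun _ _ => mem_range.2 (Nat.lt_succ_of_le (min_le_right _ _))]
    rfl
  rw [hfib, sum_product, ← oplus_pbracket_oplus, hF, hG]
  simp only [oplus_sum, pbracket_sum_left, pbracket_sum_right, oplus_bracketSeed]
  exact sum_comm

lemma rangeLE_top (p : Pol N) : RangeLE N p :=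
  fun _ _ l _ => l.isLt.le

lemma rangeLE_bracketDecomp {F G : ℕ → Pol N} (hF : ∀ m, RangeLE m (F m))
    (hG : ∀ m, RangeLE m (G m)) (m : ℕ) : RangeLE m (bracketDecomp F G m) := by
  rw [rangeLE_iff_mem_supported]
  refine sum_mem fun q hq => ?_
  simp only [cappedDiag, mem_filter, mem_product, mem_range] at hq
  rcases lt_or_ge (q.1 + q.2) N with h | h
  · rw [show m = q.1 + q.2 by omega]
    exact bracketSeed_mem_supported (rangeLE_iff_mem_supported.1 (hF _))
      (rangeLE_iff_mem_supported.1 (hG _)) h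
  · rw [← rangeLE_iff_mem_supported, show m = N by omega]
    exact rangeLE_top _

lemma Decay.const_nonneg {C σ : ℝ} {F : ℕ → Pol N} (h : Decay C σ F) : 0 ≤ C := by
  simpa using (pnorm_nonneg _).trans (h 0)

lemma decay_bracketDecomp {r' r'' : ℕ} {Cf Cg σ' σ'' σ : ℝ} {F G : ℕ → Pol N}
    (hFh : ∀ m, (F m).IsHomogeneous r') (hGh : ∀ m, (G m).IsHomogeneous r'')
    (hF : Decay Cf σ' F) (hG : Decay Cg σ'' G) (h₀ : 0 < σ) (hσ : σ < min σ' σ'') :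
    Decay ((r' : ℝ) * r'' * Cf * Cg /
      ((1 - Real.exp (-(max σ' σ''))) * (1 - Real.exp (-(max σ' σ'') + σ)))) σ
      (bracketDecomp F G) := by
  intro m
  have hC : 0 ≤ (r' : ℝ) * r'' * Cf * Cg :=
    mul_nonneg (mul_nonneg (by positivity) (Decay.const_nonneg hF)) (Decay.const_nonneg hG)
  calc pnorm (bracketDecomp F G m)
      ≤ ∑ q ∈ cappedDiag N m, r' * r'' * (pnorm (F q.1) * pnorm (G q.2)) :=
        (pnorm_sum_le _ _).trans (sum_le_sum fun q _ => pnorm_bracketSeed_le (hFh _) (hGh _) _)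
    _ ≤ ∑ q ∈ cappedDiag N m,
          r' * r'' * ((Cf * Real.exp (-σ' * q.1)) * (Cg * Real.exp (-σ'' * q.2))) :=
        sum_le_sum fun q _ => mul_le_mul_of_nonneg_left (mul_le_mul (hF _) (hG _)
          (pnorm_nonneg _) ((pnorm_nonneg _).trans (hF _))) (by positivity)
    _ = r' * r'' * Cf * Cg *
          ∑ q ∈ cappedDiag N m, Real.exp (-σ' * q.1) * Real.exp (-σ'' * q.2) := by
        rw [mul_sum]
        exact sum_congr rfl fun _ _ => by ring
    _ ≤ r' * r'' * Cf * Cg * (((1 - Real.exp (-(max σ' σ''))) *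
          (1 - Real.exp (-(max σ' σ'') + σ)))⁻¹ * Real.exp (-σ * m)) :=
        mul_le_mul_of_nonneg_left (sum_cappedDiag_exp_le_max h₀ hσ m) hC
    _ = _ := by rw [div_eq_mul_inv]; ring

end BracketSeed

lemma SeedClassD.exists_isHomogeneous {C σ : ℝ} {r : ℕ} {f : Pol N} (hfD : SeedClassD C σ f)
    (hf : f.IsHomogeneous r) :
    ∃ F : ℕ → Pol N, IsDecomp f F ∧ Decay C σ F ∧ ∀ m, (F m).IsHomogeneous r := by
  obtain ⟨F, ⟨hsum, hrange⟩, hdecay⟩ := hfD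
  refine ⟨fun m => homogeneousComponent r (F m), ⟨?_, fun m d hd => hrange m d ?_⟩,
    fun m => (pnorm_homogeneousComponent_le r _).trans (hdecay m),
    fun m => homogeneousComponent_isHomogeneous r _⟩
  · rw [← map_sum, ← hsum, homogeneousComponent_eq_self hf]
  · rw [support_homogeneousComponent] at hd
    exact (mem_filter.1 hd).1

end CyclicSeed

open CyclicSeed in
theorem stmt4 (N : ℕ) (r' r'' : ℕ) (f g : Pol N) (Cf Cg σ' σ'' σ : ℝ)
    (hf : f.IsHomogeneous r') (hg : g.IsHomogeneous r'')
    (hfD : SeedClassD Cf σ' f) (hgD : SeedClassD Cg σ'' g)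
    (hσpos : 0 < σ) (hσ : σ < min σ' σ'') :
    ∃ h : Pol N, oplus h = pbracket (oplus f) (oplus g) ∧
      SeedClassD ((r' : ℝ) * r'' * Cf * Cg /
          ((1 - Real.exp (-(max σ' σ''))) * (1 - Real.exp (-(max σ' σ'') + σ)))) σ h := by
  obtain ⟨F, ⟨hFsum, hFrange⟩, hFdecay, hFhom⟩ := hfD.exists_isHomogeneous hf
  obtain ⟨G, ⟨hGsum, hGrange⟩, hGdecay, hGhom⟩ := hgD.exists_isHomogeneous hg
  exact ⟨_, oplus_sum_bracketDecomp hFsum hGsum, bracketDecomp F G,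
    ⟨rfl, rangeLE_bracketDecomp hFrange hGrange⟩,
    decay_bracketDecomp hFhom hGhom hFdecay hGdecay hσpos hσ⟩
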